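/- arXiv:2501.14440 — 5 statements merged into one kernel-verified Lean document; each statement's English description precedes it below -/
import Mathlib

section
/- Suppose matrices W₁, ..., W_{H+1} (with W_ℓ ∈ R^{d_ℓ × d_{ℓ−1}}) satisfy the balanced condition W_ℓ W_ℓᵀ = W_{ℓ+1}ᵀ W_{ℓ+1} for all 1 ≤ ℓ ≤ H, and let M = W_{H+1} W_H ⋯ W₁. Then Mᵀ M = (W₁ᵀ W₁)^{H+1} and M Mᵀ = (W_{H+1} W_{H+1}ᵀ)^{H+1}. -/
/-!
Write `P n = W (n-1) ⋯ W 0` and `G = (W 0)ᵀ W 0`. Balancedness lets each Gram matrix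
`(W n)ᵀ W n` slide through the partial product: `(W n)ᵀ W n P n = P n G`, which gives
`(P (n+1))ᵀ P (n+1) = (P n)ᵀ P n G`, hence `G ^ (n+1)`. On the other side,
`P (n+1) (P (n+1))ᵀ = W n (W (n-1) (W (n-1))ᵀ) ^ n (W n)ᵀ = W n ((W n)ᵀ W n) ^ n (W n)ᵀ`,
which is `(W n (W n)ᵀ) ^ (n+1)`.
-/

open Matrix

/-- Product `W (n-1) * ⋯ * W 0` of a chain of matrices with compatible dimensions. -/
def chainProd (d : ℕ → ℕ) (W : ∀ ℓ, Matrix (Fin (d (ℓ + 1))) (Fin (d ℓ)) ℝ) :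
    (n : ℕ) → Matrix (Fin (d n)) (Fin (d 0)) ℝ
  | 0 => 1
  | n + 1 => W n * chainProd d W n

theorem Matrix.mul_mul_pow_mul_eq_pow_succ {m n α : Type*} [Fintype m] [Fintype n]
    [DecidableEq m] [DecidableEq n] [Semiring α] (A : Matrix m n α) (B : Matrix n m α) :
    ∀ k : ℕ, A * (B * A) ^ k * B = (A * B) ^ (k + 1)
  | 0 => by simp
  | k + 1 => by
    rw [pow_succ, pow_succ, ← mul_mul_pow_mul_eq_pow_succ A B k]
    simp only [Matrix.mul_assoc]

section chainProd

variable {d : ℕ → ℕ} {W : ∀ ℓ, Matrix (Fin (d (ℓ + 1))) (Fin (d ℓ)) ℝ}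

@[simp]
theorem chainProd_zero : chainProd d W 0 = 1 := rfl

@[simp]
theorem chainProd_succ (n : ℕ) : chainProd d W (n + 1) = W n * chainProd d W n := rfl

variable {H : ℕ} (hbal : ∀ ℓ < H, W ℓ * (W ℓ)ᵀ = (W (ℓ + 1))ᵀ * W (ℓ + 1))
include hbal

theorem gram_mul_chainProd {n : ℕ} (hn : n ≤ H) :
    (W n)ᵀ * W n * chainProd d W n = chainProd d W n * ((W 0)ᵀ * W 0) := by
  induction n with
  | zero => simp
  | succ n ih =>
    calc (W (n + 1))ᵀ * W (n + 1) * chainProd d W (n + 1)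
        = W n * ((W n)ᵀ * W n * chainProd d W n) := by
          rw [← hbal n (by omega), chainProd_succ]
          simp only [Matrix.mul_assoc]
      _ = chainProd d W (n + 1) * ((W 0)ᵀ * W 0) := by
          rw [ih (by omega), chainProd_succ, Matrix.mul_assoc]

theorem chainProd_transpose_mul_self {n : ℕ} (hn : n ≤ H + 1) :
    (chainProd d W n)ᵀ * chainProd d W n = ((W 0)ᵀ * W 0) ^ n := by
  induction n with
  | zero => simp
  | succ n ih =>
    calc (chainProd d W (n + 1))ᵀ * chainProd d W (n + 1)
        = (chainProd d W n)ᵀ * ((W n)ᵀ * W n * chainProd d W n) := by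
          simp only [chainProd_succ, transpose_mul, Matrix.mul_assoc]
      _ = ((W 0)ᵀ * W 0) ^ (n + 1) := by
          rw [gram_mul_chainProd hbal (by omega), ← Matrix.mul_assoc, ih (by omega), pow_succ]

theorem chainProd_succ_mul_transpose_self {n : ℕ} (hn : n ≤ H) :
    chainProd d W (n + 1) * (chainProd d W (n + 1))ᵀ = (W n * (W n)ᵀ) ^ (n + 1) := by
  induction n with
  | zero => simp
  | succ n ih =>
    calc chainProd d W (n + 2) * (chainProd d W (n + 2))ᵀ
        = W (n + 1) * (chainProd d W (n + 1) * (chainProd d W (n + 1))ᵀ) * (W (n + 1))ᵀ := by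
          rw [chainProd_succ (n + 1), transpose_mul]
          simp only [Matrix.mul_assoc]
      _ = (W (n + 1) * (W (n + 1))ᵀ) ^ (n + 2) := by
          rw [ih (by omega), hbal n (by omega), mul_mul_pow_mul_eq_pow_succ]

end chainProd

theorem balanced_gram_power (H : ℕ) (d : ℕ → ℕ)
    (W : ∀ ℓ, Matrix (Fin (d (ℓ + 1))) (Fin (d ℓ)) ℝ)
    (hbal : ∀ ℓ < H, W ℓ * (W ℓ)ᵀ = (W (ℓ + 1))ᵀ * W (ℓ + 1)) :
    (chainProd d W (H + 1))ᵀ * chainProd d W (H + 1) = ((W 0)ᵀ * W 0) ^ (H + 1) ∧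
      chainProd d W (H + 1) * (chainProd d W (H + 1))ᵀ = (W H * (W H)ᵀ) ^ (H + 1) :=
  ⟨chainProd_transpose_mul_self hbal le_rfl, chainProd_succ_mul_transpose_self hbal le_rfl⟩
end

section
/- Let W₁, ..., W_{H+1} be balanced matrices with W_{H+1} W_H ⋯ W₁ = C for a fixed matrix C ∈ R^{d_y × d_x}. Then Σ_{ℓ=1}^{H+1} ‖W_ℓ‖_F² = (H+1)·Σ_i σ_i(C)^{2/(H+1)}, where the sum runs over all singular values σ_i(C) of C (counted with multiplicity, including zeros). -/
open Matrix

/-- Squared Frobenius norm. -/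
noncomputable def frobSq {m n : ℕ} (A : Matrix (Fin m) (Fin n) ℝ) : ℝ :=
  ∑ i, ∑ j, (A i j) ^ 2

/-!
Balancedness lets one slide the Gram matrix `G = W₀ᵀ W₀` through the product: the partial
product `P_{n+1}` satisfies `P_{n+1} G = (W_n W_nᵀ) P_{n+1}`, whence `CᵀC = G^{H+1}`. The same
identities `tr (W_ℓ W_ℓᵀ) = tr (W_{ℓ+1}ᵀ W_{ℓ+1})` show that every layer has energy `tr G`.
Since `G` is positive semidefinite it is the `(H+1)`-th root of `CᵀC`, so
`tr G = Σ_i λ_i(CᵀC)^{1/(H+1)}`.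
-/

lemma frobSq_eq_trace_transpose_mul_self {m n : ℕ} (A : Matrix (Fin m) (Fin n) ℝ) :
    frobSq A = (Aᵀ * A).trace := by
  simp only [frobSq, trace, diag, mul_apply, transpose_apply, sq]
  exact Finset.sum_comm

lemma Matrix.IsHermitian.trace_cfc {n 𝕜 : Type*} [Fintype n] [DecidableEq n] [RCLike 𝕜]
    {A : Matrix n n 𝕜} (hA : A.IsHermitian) (f : ℝ → ℝ) :
    (cfc f A).trace = ∑ i, (f (hA.eigenvalues i) : 𝕜) := by
  rw [hA.cfc_eq, IsHermitian.cfc, Unitary.conjStarAlgAut_apply, trace_mul_cycle,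
    Unitary.coe_star_mul_self, one_mul, trace_diagonal]
  rfl

lemma cfc_rpow_one_div_pow {A : Type*} [Ring A] [StarRing A] [Algebra ℝ A]
    [TopologicalSpace A] [ContinuousFunctionalCalculus ℝ A IsSelfAdjoint]
    [ContinuousMap.UniqueHom ℝ A] {a : A} (ha : IsSelfAdjoint a)
    (ha_nonneg : ∀ x ∈ spectrum ℝ a, 0 ≤ x) {n : ℕ} (hn : n ≠ 0) :
    cfc (fun x : ℝ => x ^ ((1 : ℝ) / n)) (a ^ n) = a := by
  have hcont : Continuous fun x : ℝ => x ^ ((1 : ℝ) / n) :=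
    Real.continuous_rpow_const (by positivity)
  rw [← cfc_pow_id (R := ℝ) a n, ← cfc_comp _ _ a ha hcont.continuousOn]
  conv_rhs => rw [← cfc_id' ℝ a]
  refine cfc_congr fun x hx => ?_
  rw [Function.comp_apply, ← Real.rpow_natCast, ← Real.rpow_mul (ha_nonneg x hx),
    mul_one_div_cancel (by exact_mod_cast hn), Real.rpow_one]

section Balanced

variable {d : ℕ → ℕ} {W : ∀ ℓ, Matrix (Fin (d (ℓ + 1))) (Fin (d ℓ)) ℝ} {H : ℕ}

lemma chainProd_mul_gram_of_balanced
    (hbal : ∀ ℓ < H, W ℓ * (W ℓ)ᵀ = (W (ℓ + 1))ᵀ * W (ℓ + 1)) {n : ℕ} (hn : n ≤ H) :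
    chainProd d W (n + 1) * ((W 0)ᵀ * W 0) = W n * (W n)ᵀ * chainProd d W (n + 1) := by
  induction n with
  | zero => simp [chainProd, Matrix.mul_assoc]
  | succ k ih =>
    calc chainProd d W (k + 2) * ((W 0)ᵀ * W 0)
        = W (k + 1) * (chainProd d W (k + 1) * ((W 0)ᵀ * W 0)) := by
          simp only [chainProd, Matrix.mul_assoc]
      _ = W (k + 1) * (W k * (W k)ᵀ * chainProd d W (k + 1)) := by rw [ih (by omega)]
      _ = W (k + 1) * (W (k + 1))ᵀ * chainProd d W (k + 2) := by
          rw [hbal k hn]; simp only [chainProd, Matrix.mul_assoc]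

lemma transpose_chainProd_mul_chainProd_of_balanced
    (hbal : ∀ ℓ < H, W ℓ * (W ℓ)ᵀ = (W (ℓ + 1))ᵀ * W (ℓ + 1)) {k : ℕ} (hk : k ≤ H) :
    (chainProd d W (k + 1))ᵀ * chainProd d W (k + 1) = ((W 0)ᵀ * W 0) ^ (k + 1) := by
  induction k with
  | zero => simp [chainProd]
  | succ m ih =>
    calc (chainProd d W (m + 2))ᵀ * chainProd d W (m + 2)
        = (chainProd d W (m + 1))ᵀ * ((W (m + 1))ᵀ * W (m + 1) * chainProd d W (m + 1)) := by
          simp only [chainProd, transpose_mul, Matrix.mul_assoc]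
      _ = (chainProd d W (m + 1))ᵀ * (chainProd d W (m + 1) * ((W 0)ᵀ * W 0)) := by
          rw [← hbal m hk, chainProd_mul_gram_of_balanced hbal (by omega)]
      _ = ((W 0)ᵀ * W 0) ^ (m + 2) := by rw [← Matrix.mul_assoc, ih (by omega), ← pow_succ]

lemma frobSq_eq_frobSq_zero_of_balanced
    (hbal : ∀ ℓ < H, W ℓ * (W ℓ)ᵀ = (W (ℓ + 1))ᵀ * W (ℓ + 1)) {ℓ : ℕ} (hℓ : ℓ ≤ H) :
    frobSq (W ℓ) = frobSq (W 0) := by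
  induction ℓ with
  | zero => rfl
  | succ m ih =>
    rw [← ih (by omega), frobSq_eq_trace_transpose_mul_self, ← hbal m hℓ, trace_mul_comm,
      frobSq_eq_trace_transpose_mul_self]

end Balanced

/-- For a balanced factorization `C = W_{H+1} ⋯ W₁`, the total energy
`Σ ‖W_ℓ‖_F²` equals `(H+1)·Σ_i σ_i(C)^{2/(H+1)}`; the sum over singular values of `C`
(with multiplicity, including zeros) is expressed as the sum of the `(H+1)`-th roots of
the eigenvalues of `Cᵀ C` (the extra zero eigenvalues contribute nothing). -/
theorem balanced_energy (H : ℕ) (d : ℕ → ℕ)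
    (W : ∀ ℓ, Matrix (Fin (d (ℓ + 1))) (Fin (d ℓ)) ℝ)
    (hbal : ∀ ℓ < H, W ℓ * (W ℓ)ᵀ = (W (ℓ + 1))ᵀ * W (ℓ + 1))
    (C : Matrix (Fin (d (H + 1))) (Fin (d 0)) ℝ)
    (hC : chainProd d W (H + 1) = C) :
    ∑ ℓ ∈ Finset.range (H + 1), frobSq (W ℓ) =
      (H + 1 : ℝ) *
        ∑ i, ((Matrix.isHermitian_conjTranspose_mul_self C).eigenvalues i) ^
          ((1 : ℝ) / (H + 1)) := by
  have hgram : Cᴴ * C = ((W 0)ᵀ * W 0) ^ (H + 1) := by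
    rw [conjTranspose_eq_transpose_of_trivial, ← hC,
      transpose_chainProd_mul_chainProd_of_balanced hbal le_rfl]
  have hpsd : ((W 0)ᵀ * W 0).PosSemidef := by
    simpa using posSemidef_conjTranspose_mul_self (W 0)
  have hroot : cfc (fun x : ℝ => x ^ ((1 : ℝ) / (H + 1))) (Cᴴ * C) = (W 0)ᵀ * W 0 := by
    rw [hgram]
    exact_mod_cast cfc_rpow_one_div_pow hpsd.isHermitian
      (posSemidef_iff_isHermitian_and_spectrum_nonneg.mp hpsd).2 (Nat.succ_ne_zero H)
  calc ∑ ℓ ∈ Finset.range (H + 1), frobSq (W ℓ)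
      = ∑ ℓ ∈ Finset.range (H + 1), frobSq (W 0) := Finset.sum_congr rfl fun ℓ hℓ =>
        frobSq_eq_frobSq_zero_of_balanced hbal (Nat.lt_succ_iff.mp (Finset.mem_range.mp hℓ))
    _ = (H + 1 : ℝ) * ((W 0)ᵀ * W 0).trace := by
        simp [frobSq_eq_trace_transpose_mul_self]
    _ = _ := by rw [← hroot, IsHermitian.trace_cfc]; rfl
end

section
/- Among all factorizations C = W_{H+1} W_H ⋯ W₁ of a fixed matrix C ∈ R^{d_y × d_x} through dimensions d_x = d₀, d₁, ..., d_{H+1} = d_y with each d_ℓ ≥ min(d_x, d_y), the minimum of the total energy Σ_{ℓ=1}^{H+1} ‖W_ℓ‖_F² equals (H+1)·Σ_{i} σ_i(C)^{2/(H+1)}, where the sum is over the singular values of C. -/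
open Matrix

theorem Matrix.isHermitian_transpose_mul_self {m n : Type*} [Fintype m]
    (A : Matrix m n ℝ) : (Aᵀ * A).IsHermitian := by
  simpa [Matrix.conjTranspose_eq_transpose_of_trivial] using
    Matrix.isHermitian_conjTranspose_mul_self A

/-!
Lower bound, by induction on the depth. Write the product as `A * B` with `B` the product of the
lower factors, let `V` diagonalize `BᵀB = V diag(β) Vᵀ`, and let `γⱼ` be the diagonal entries of
`(ABV)ᵀ(ABV)`. Concavity of `x ↦ x ^ q` gives `∑ σᵢ(AB)^(2q) ≤ ∑ γⱼ^q` (Schur), weighted AM-GM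
splits `(p + 1) γⱼ^(1/(p+1))` into `γⱼ / βⱼ + p βⱼ^(1/p)`, and `∑ γⱼ / βⱼ ≤ ‖A‖_F²` because the
normalised nonzero columns of `BV` are orthonormal (Bessel).

Attainment: from a compact SVD `C = U diag(σ) Q` with `rank C` singular values, take every factor
to be an isometric embedding of `diag(σ ^ (1/(H+1)))`; each then has energy `∑ σᵢ^(2/(H+1))`.
-/

namespace Matrix

section
variable {m n : Type*} [Fintype m]

theorem transpose_mul_self_eq_zero {A : Matrix m n ℝ} : Aᵀ * A = 0 ↔ A = 0 := by
  simpa using conjTranspose_mul_self_eq_zero (A := A)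

variable [Fintype n]

theorem posSemidef_transpose_mul_self (A : Matrix m n ℝ) : (Aᵀ * A).PosSemidef := by
  simpa using posSemidef_conjTranspose_mul_self A

theorem mul_eq_self_of_transpose_mul_self_mul_eq {C : Matrix m n ℝ} {P : Matrix n n ℝ}
    (h : Cᵀ * C * P = Cᵀ * C) : C * P = C := by
  have h' : Pᵀ * (Cᵀ * C) = Cᵀ * C := by
    simpa [Matrix.mul_assoc] using congrArg transpose h
  rw [← sub_eq_zero, ← transpose_mul_self_eq_zero]
  calc (C * P - C)ᵀ * (C * P - C)
      = Pᵀ * (Cᵀ * C * P) - Pᵀ * (Cᵀ * C) - (Cᵀ * C * P - Cᵀ * C) := by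
        simp only [transpose_sub, transpose_mul, Matrix.sub_mul, Matrix.mul_sub, Matrix.mul_assoc]
        abel
    _ = 0 := by simp [h, h']

end

namespace IsHermitian
variable {n : Type*} [Fintype n] [DecidableEq n] {A : Matrix n n ℝ}

theorem transpose_eigenvectorUnitary_mul_self (hA : A.IsHermitian) :
    (hA.eigenvectorUnitary : Matrix n n ℝ)ᵀ * hA.eigenvectorUnitary = 1 := by
  rw [← conjTranspose_eq_transpose_of_trivial, ← star_eq_conjTranspose, Unitary.coe_star_mul_self]

theorem eigenvectorUnitary_mul_transpose_self (hA : A.IsHermitian) :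
    (hA.eigenvectorUnitary : Matrix n n ℝ) * (hA.eigenvectorUnitary : Matrix n n ℝ)ᵀ = 1 :=
  mul_eq_one_comm.mp hA.transpose_eigenvectorUnitary_mul_self

theorem transpose_eigenvectorUnitary_mul_mul (hA : A.IsHermitian) :
    (hA.eigenvectorUnitary : Matrix n n ℝ)ᵀ * A * hA.eigenvectorUnitary =
      diagonal hA.eigenvalues := by
  have h := hA.conjStarAlgAut_star_eigenvectorUnitary
  rw [Unitary.conjStarAlgAut_star_apply] at h
  simpa [star_eq_conjTranspose] using h

theorem eq_eigenvectorUnitary_mul_mul (hA : A.IsHermitian) :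
    A = hA.eigenvectorUnitary * diagonal hA.eigenvalues *
      (hA.eigenvectorUnitary : Matrix n n ℝ)ᵀ := by
  rw [← hA.transpose_eigenvectorUnitary_mul_mul]
  simp only [← Matrix.mul_assoc, hA.eigenvectorUnitary_mul_transpose_self, Matrix.one_mul]
  rw [Matrix.mul_assoc, hA.eigenvectorUnitary_mul_transpose_self, Matrix.mul_one]

end IsHermitian

theorem PosSemidef.sum_map_eigenvalues_le_sum_map_diag {n : Type*} [Fintype n] [DecidableEq n]
    {M : Matrix n n ℝ} (hM : M.PosSemidef) {V : Matrix n n ℝ} (hV : Vᵀ * V = 1) {f : ℝ → ℝ}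
    (hf : ConcaveOn ℝ (Set.Ici 0) f) :
    ∑ i, f (hM.1.eigenvalues i) ≤ ∑ j, f ((Vᵀ * M * V) j j) := by
  set U : Matrix n n ℝ := ↑hM.1.eigenvectorUnitary
  set W := Vᵀ * U
  have hWW : W * Wᵀ = 1 := by
    rw [transpose_mul, transpose_transpose, Matrix.mul_assoc, ← Matrix.mul_assoc U,
      hM.1.eigenvectorUnitary_mul_transpose_self, Matrix.one_mul, hV]
  have hWW' : Wᵀ * W = 1 := mul_eq_one_comm.mp hWW
  have hrow : ∀ j, ∑ i, W j i ^ 2 = 1 := fun j => by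
    simpa [Matrix.mul_apply, sq] using congrFun (congrFun hWW j) j
  have hcol : ∀ i, ∑ j, W j i ^ 2 = 1 := fun i => by
    simpa [Matrix.mul_apply, sq] using congrFun (congrFun hWW' i) i
  -- `Vᵀ M V = W Λ Wᵀ`, so its diagonal averages the eigenvalues with the weights `W j i ^ 2`
  have hdiag : ∀ j, (Vᵀ * M * V) j j = ∑ i, W j i ^ 2 * hM.1.eigenvalues i := by
    have hconj : Vᵀ * M * V = W * diagonal hM.1.eigenvalues * Wᵀ := by
      conv_lhs => rw [hM.1.eq_eigenvectorUnitary_mul_mul]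
      simp only [W, transpose_mul, transpose_transpose, Matrix.mul_assoc]; rfl
    intro j
    rw [hconj, Matrix.mul_apply]
    simp only [mul_diagonal, transpose_apply]
    exact Finset.sum_congr rfl fun i _ => by ring
  calc ∑ i, f (hM.1.eigenvalues i) = ∑ j, ∑ i, W j i ^ 2 • f (hM.1.eigenvalues i) := by
        rw [Finset.sum_comm]; simp [← Finset.sum_mul, hcol]
    _ ≤ ∑ j, f (∑ i, W j i ^ 2 • hM.1.eigenvalues i) := Finset.sum_le_sum fun j _ =>
        hf.le_map_sum (fun i _ => sq_nonneg _) (hrow j) fun i _ => hM.eigenvalues_nonneg i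
    _ = ∑ j, f ((Vᵀ * M * V) j j) := by simp [hdiag]

end Matrix

theorem Real.add_one_mul_rpow_le {p γ β : ℝ} (hp : 0 < p) (hγ : 0 ≤ γ) (hβ : 0 ≤ β)
    (hγβ : β = 0 → γ = 0) :
    (p + 1) * γ ^ (1 / (p + 1)) ≤ γ / β + p * β ^ (1 / p) := by
  rcases hβ.eq_or_lt with rfl | hβ
  · rw [hγβ rfl, Real.zero_rpow (by positivity), Real.zero_rpow (by positivity)]
    simp
  have hp1 : 0 < p + 1 := by linarith
  -- weighted AM-GM for `γ / β` and `β ^ (1 / p)` with weights `1 / (p + 1)` and `p / (p + 1)`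
  have h := Real.geom_mean_le_arith_mean2_weighted (w₁ := 1 / (p + 1)) (w₂ := p / (p + 1))
    (by positivity) (by positivity) (div_nonneg hγ hβ.le) (Real.rpow_nonneg hβ.le (1 / p))
    (by field_simp; ring)
  have hprod : (γ / β) ^ (1 / (p + 1)) * (β ^ (1 / p)) ^ (p / (p + 1)) = γ ^ (1 / (p + 1)) := by
    rw [← Real.rpow_mul hβ.le, Real.div_rpow hγ hβ.le, show 1 / p * (p / (p + 1)) = 1 / (p + 1) by
      field_simp, div_mul_cancel₀ _ (Real.rpow_pos_of_pos hβ _).ne']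
  rw [hprod] at h
  calc (p + 1) * γ ^ (1 / (p + 1))
      ≤ (p + 1) * (1 / (p + 1) * (γ / β) + p / (p + 1) * β ^ (1 / p)) :=
        mul_le_mul_of_nonneg_left h hp1.le
    _ = γ / β + p * β ^ (1 / p) := by field_simp

section frobSq
variable {a b c : ℕ}

theorem frobSq_eq_trace (A : Matrix (Fin a) (Fin b) ℝ) : frobSq A = (Aᵀ * A).trace := by
  simp only [frobSq, trace, diag, Matrix.mul_apply, transpose_apply, sq]
  exact Finset.sum_comm

theorem frobSq_nonneg (A : Matrix (Fin a) (Fin b) ℝ) : 0 ≤ frobSq A := by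
  unfold frobSq; positivity

theorem frobSq_mul_le_of_isIdempotentElem (A : Matrix (Fin a) (Fin b) ℝ)
    {U : Matrix (Fin b) (Fin c) ℝ} (hU : IsIdempotentElem (Uᵀ * U)) :
    frobSq (A * U) ≤ frobSq A := by
  set P := U * Uᵀ
  have hUP : P * U = U := by
    rw [Matrix.mul_assoc]; exact mul_eq_self_of_transpose_mul_self_mul_eq hU
  have hP : P * P = P := by rw [← Matrix.mul_assoc, hUP]
  have hPt : Pᵀ = P := by simp [P]
  set G := Aᵀ * A
  have hAU : frobSq (A * U) = (G * P).trace := by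
    rw [frobSq_eq_trace, transpose_mul, Matrix.mul_assoc, trace_mul_comm]
    simp only [G, P, Matrix.mul_assoc]
  have hAP : frobSq (A - A * P) = G.trace - (G * P).trace := by
    have hPG : (P * G).trace = (G * P).trace := trace_mul_comm _ _
    have hPGP : (P * G * P).trace = (G * P).trace := by
      rw [trace_mul_comm, ← Matrix.mul_assoc, hP, hPG]
    have hexp : (A - A * P)ᵀ * (A - A * P) = G - P * G - (G * P - P * G * P) := by
      simp only [G, transpose_sub, transpose_mul, hPt, Matrix.sub_mul, Matrix.mul_sub,
        Matrix.mul_assoc]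
    rw [frobSq_eq_trace, hexp, trace_sub, trace_sub, trace_sub, hPG, hPGP]
    ring
  linarith [frobSq_nonneg (A - A * P), frobSq_eq_trace A]

theorem frobSq_mul_mul_of_orthonormal {κ κ' : Type*} [Fintype κ] [Fintype κ'] [DecidableEq κ]
    [DecidableEq κ'] {L : Matrix (Fin a) κ ℝ} (hL : Lᵀ * L = 1) (D : Matrix κ κ' ℝ)
    {R : Matrix κ' (Fin b) ℝ} (hR : R * Rᵀ = 1) : frobSq (L * D * R) = (Dᵀ * D).trace := by
  have h : (L * D * R)ᵀ * (L * D * R) = Rᵀ * (Dᵀ * D) * R := by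
    simp only [transpose_mul, Matrix.mul_assoc]
    rw [← Matrix.mul_assoc Lᵀ L, hL, Matrix.one_mul]
  rw [frobSq_eq_trace, h, trace_mul_cycle, hR, Matrix.one_mul]

end frobSq

/-- `∑ᵢ σᵢ(A) ^ (2 * q)`, written with the eigenvalues `σᵢ(A) ^ 2` of `Aᵀ * A`. -/
noncomputable def gramEigenRpowSum {m n : Type*} [Fintype m] [Fintype n] [DecidableEq n]
    (A : Matrix m n ℝ) (q : ℝ) : ℝ :=
  ∑ i, (A.isHermitian_transpose_mul_self.eigenvalues i) ^ q

theorem gramEigenRpowSum_one {a b : ℕ} (A : Matrix (Fin a) (Fin b) ℝ) :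
    gramEigenRpowSum A 1 = frobSq A := by
  simpa [gramEigenRpowSum, frobSq_eq_trace] using
    (A.isHermitian_transpose_mul_self.trace_eq_sum_eigenvalues).symm

theorem sum_div_le_frobSq_of_transpose_mul_self_eq_diagonal {a b c : ℕ}
    (A : Matrix (Fin a) (Fin b) ℝ) {Y : Matrix (Fin b) (Fin c) ℝ} {β : Fin c → ℝ}
    (hβ : ∀ j, 0 ≤ β j) (hY : Yᵀ * Y = diagonal β) :
    ∑ j, ((A * Y)ᵀ * (A * Y)) j j / β j ≤ frobSq A := by
  set t : Fin c → ℝ := fun j => (√(β j))⁻¹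
  have ht : ∀ j, t j * t j = (β j)⁻¹ := fun j => by rw [← mul_inv, Real.mul_self_sqrt (hβ j)]
  -- the nonzero columns of `Y * diagonal t` are orthonormal
  set U := Y * diagonal t
  have hU : Uᵀ * U = diagonal fun j => (β j)⁻¹ * β j := by
    rw [transpose_mul, diagonal_transpose, Matrix.mul_assoc, ← Matrix.mul_assoc Yᵀ, hY,
      diagonal_mul_diagonal, diagonal_mul_diagonal]
    congr 1; funext j; rw [← ht]; ring
  have hAU : frobSq (A * U) = ∑ j, ((A * Y)ᵀ * (A * Y)) j j / β j := by
    have h : (A * U)ᵀ * (A * U) = diagonal t * ((A * Y)ᵀ * (A * Y)) * diagonal t := by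
      simp only [U, transpose_mul, diagonal_transpose, Matrix.mul_assoc]
    rw [frobSq_eq_trace, h, trace]
    refine Finset.sum_congr rfl fun j _ => ?_
    simp only [diag, diagonal_mul, mul_diagonal]
    rw [div_eq_mul_inv, ← ht]; ring
  rw [← hAU]
  refine frobSq_mul_le_of_isIdempotentElem A ?_
  rw [hU, IsIdempotentElem, diagonal_mul_diagonal]
  congr 1; funext j
  by_cases hj : β j = 0 <;> simp [hj]

theorem gramEigenRpowSum_mul_le {a b c : ℕ} {p : ℝ} (hp : 0 < p) (A : Matrix (Fin a) (Fin b) ℝ)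
    (B : Matrix (Fin b) (Fin c) ℝ) :
    (p + 1) * gramEigenRpowSum (A * B) (1 / (p + 1)) ≤
      frobSq A + p * gramEigenRpowSum B (1 / p) := by
  set hB := B.isHermitian_transpose_mul_self
  set β := hB.eigenvalues
  set V : Matrix (Fin c) (Fin c) ℝ := ↑hB.eigenvectorUnitary
  set Y := B * V
  have hY : Yᵀ * Y = diagonal β := by
    simpa [Y, Matrix.mul_assoc] using hB.transpose_eigenvectorUnitary_mul_mul
  set γ : Fin c → ℝ := fun j => ((A * Y)ᵀ * (A * Y)) j j
  have hγ : ∀ j, 0 ≤ γ j := fun j => (posSemidef_transpose_mul_self (A * Y)).diag_nonneg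
  have hSchur : gramEigenRpowSum (A * B) (1 / (p + 1)) ≤ ∑ j, γ j ^ (1 / (p + 1)) := by
    have h := (posSemidef_transpose_mul_self (A * B)).sum_map_eigenvalues_le_sum_map_diag
      hB.transpose_eigenvectorUnitary_mul_self
      (Real.concaveOn_rpow (p := 1 / (p + 1)) (by positivity)
        (by rw [div_le_one (by linarith)]; linarith))
    have hVMV : Vᵀ * ((A * B)ᵀ * (A * B)) * V = (A * Y)ᵀ * (A * Y) := by
      simp only [Y, transpose_mul, Matrix.mul_assoc]
    rwa [hVMV] at h
  have hβ : ∀ j, 0 ≤ β j := (posSemidef_transpose_mul_self B).eigenvalues_nonneg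
  have hγβ : ∀ j, β j = 0 → γ j = 0 := by
    intro j hj
    have hsq : ∑ x, Y x j * Y x j = 0 := by
      simpa [Matrix.mul_apply, hj] using congrFun (congrFun hY j) j
    rw [Finset.sum_eq_zero_iff_of_nonneg fun _ _ => mul_self_nonneg _] at hsq
    have hcol : ∀ x, Y x j = 0 := fun x => mul_self_eq_zero.mp (hsq x (Finset.mem_univ _))
    simp [γ, Matrix.mul_apply, hcol]
  have hBessel : ∑ j, γ j / β j ≤ frobSq A :=
    sum_div_le_frobSq_of_transpose_mul_self_eq_diagonal A hβ hY
  calc (p + 1) * gramEigenRpowSum (A * B) (1 / (p + 1))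
      ≤ ∑ j, (p + 1) * γ j ^ (1 / (p + 1)) := by
        rw [← Finset.mul_sum]; exact mul_le_mul_of_nonneg_left hSchur (by linarith)
    _ ≤ ∑ j, (γ j / β j + p * β j ^ (1 / p)) := Finset.sum_le_sum fun j _ =>
        Real.add_one_mul_rpow_le hp (hγ j) (hβ j) (hγβ j)
    _ ≤ frobSq A + p * gramEigenRpowSum B (1 / p) := by
        rw [Finset.sum_add_distrib, ← Finset.mul_sum]
        exact add_le_add hBessel le_rfl

theorem add_one_mul_gramEigenRpowSum_chainProd_le (d : ℕ → ℕ)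
    (W : ∀ ℓ, Matrix (Fin (d (ℓ + 1))) (Fin (d ℓ)) ℝ) (n : ℕ) :
    ((n : ℝ) + 1) * gramEigenRpowSum (chainProd d W (n + 1)) (1 / ((n : ℝ) + 1)) ≤
      ∑ ℓ ∈ Finset.range (n + 1), frobSq (W ℓ) := by
  induction n with
  | zero => simp [chainProd, gramEigenRpowSum_one]
  | succ n ih =>
    have h := gramEigenRpowSum_mul_le (p := n + 1) (by positivity) (W (n + 1))
      (chainProd d W (n + 1))
    rw [Finset.sum_range_succ, chainProd]
    push_cast
    linarith

theorem Fintype.sum_subtype_eq_sum {ι M : Type*} [Fintype ι] [AddCommMonoid M] (p : ι → Prop)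
    [DecidablePred p] {F : ι → M} (hF : ∀ i, ¬p i → F i = 0) :
    ∑ a : {i // p i}, F a = ∑ i, F i := by
  rw [← Fintype.sum_subtype_add_sum_subtype p F,
    Fintype.sum_eq_zero (fun a : {i // ¬p i} => F a) fun a => hF a a.2, add_zero]

namespace Matrix
variable {m n : Type*} [Fintype m] [Fintype n] [DecidableEq n]

theorem card_eigenvalues_ne_zero_eq_rank (C : Matrix m n ℝ) :
    Fintype.card {i // C.isHermitian_transpose_mul_self.eigenvalues i ≠ 0} = C.rank := by
  rw [← C.isHermitian_transpose_mul_self.rank_eq_card_non_zero_eigs, rank_transpose_mul_self]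

abbrev gramEigenSupport (C : Matrix m n ℝ) : Type _ :=
  {i // C.isHermitian_transpose_mul_self.eigenvalues i ≠ 0}

theorem gramEigenRpowSum_eq_sum_gramEigenSupport (C : Matrix m n ℝ) {q : ℝ} (hq : q ≠ 0) :
    gramEigenRpowSum C q =
      ∑ a : C.gramEigenSupport, C.isHermitian_transpose_mul_self.eigenvalues a ^ q :=
  (Fintype.sum_subtype_eq_sum _ fun i hi => by rw [not_not.mp hi, Real.zero_rpow hq]).symm

theorem exists_compact_svd (C : Matrix m n ℝ) :
    ∃ (U : Matrix m C.gramEigenSupport ℝ) (Q : Matrix C.gramEigenSupport n ℝ),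
      Uᵀ * U = 1 ∧ Q * Qᵀ = 1 ∧
        C = U * diagonal (fun a : C.gramEigenSupport =>
          √(C.isHermitian_transpose_mul_self.eigenvalues a)) * Q := by
  set hC := C.isHermitian_transpose_mul_self
  set ev := hC.eigenvalues
  set V : Matrix n n ℝ := ↑hC.eigenvectorUnitary
  set Q : Matrix C.gramEigenSupport n ℝ := Vᵀ.submatrix Subtype.val id
  have hQ : Q * Qᵀ = 1 := by
    rw [transpose_submatrix, transpose_transpose, ← submatrix_mul _ _ _ _ _ Function.bijective_id,
      hC.transpose_eigenvectorUnitary_mul_self, submatrix_one _ Subtype.val_injective]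
  have hGram : Cᵀ * C = Qᵀ * diagonal (fun a : C.gramEigenSupport => ev a) * Q := by
    ext x y
    refine (congrFun (congrFun hC.eq_eigenvectorUnitary_mul_mul x) y).trans ?_
    rw [Matrix.mul_apply, Matrix.mul_apply]
    simp only [mul_diagonal, transpose_apply, Q, submatrix_apply, id]
    exact (Fintype.sum_subtype_eq_sum (fun i => ev i ≠ 0) fun i hi => by
      simp [show hC.eigenvalues i = 0 from not_not.mp hi]).symm
  have hev : ∀ a : C.gramEigenSupport, 0 < ev a := fun a =>
    ((posSemidef_transpose_mul_self C).eigenvalues_nonneg a).lt_of_ne' a.2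
  set σ : C.gramEigenSupport → ℝ := fun a => √(ev a)
  have hσ : ∀ a, σ a ≠ 0 := fun a => (Real.sqrt_pos.mpr (hev a)).ne'
  have hQGQ : Q * (Cᵀ * C) * Qᵀ = diagonal fun a : C.gramEigenSupport => ev a := by
    simp only [hGram, ← Matrix.mul_assoc, hQ, Matrix.one_mul]
    rw [Matrix.mul_assoc, hQ, Matrix.mul_one]
  refine ⟨C * Qᵀ * diagonal fun a => (σ a)⁻¹, Q, ?_, hQ, ?_⟩
  · have h : (C * Qᵀ * diagonal fun a => (σ a)⁻¹)ᵀ * (C * Qᵀ * diagonal fun a => (σ a)⁻¹) =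
        (diagonal fun a => (σ a)⁻¹) * (Q * (Cᵀ * C) * Qᵀ) * diagonal fun a => (σ a)⁻¹ := by
      simp only [transpose_mul, diagonal_transpose, transpose_transpose, Matrix.mul_assoc]
    rw [h, hQGQ, diagonal_mul_diagonal, diagonal_mul_diagonal, ← diagonal_one]
    congr 1; funext a
    rw [show ev a = σ a * σ a from (Real.mul_self_sqrt (hev a).le).symm]
    field_simp [hσ a]
  · have hCQ : C * (Qᵀ * Q) = C := by
      refine mul_eq_self_of_transpose_mul_self_mul_eq ?_
      simp only [hGram, Matrix.mul_assoc]
      rw [← Matrix.mul_assoc Q Qᵀ, hQ, Matrix.one_mul]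
    calc C = C * (Qᵀ * Q) := hCQ.symm
      _ = C * Qᵀ * ((diagonal fun a => (σ a)⁻¹) * diagonal σ) * Q := by
        rw [diagonal_mul_diagonal, show (fun a => (σ a)⁻¹ * σ a) = fun _ => 1 from
          funext fun a => inv_mul_cancel₀ (hσ a), diagonal_one, Matrix.mul_one, Matrix.mul_assoc]
      _ = _ := by simp only [Matrix.mul_assoc]

end Matrix

theorem Matrix.exists_transpose_mul_self_eq_one {m κ : Type*} [Fintype m] [DecidableEq m]
    [Fintype κ] [DecidableEq κ] (h : Fintype.card κ ≤ Fintype.card m) :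
    ∃ E : Matrix m κ ℝ, Eᵀ * E = 1 := by
  obtain ⟨f⟩ := Function.Embedding.nonempty_of_card_le h
  refine ⟨(1 : Matrix m m ℝ).submatrix id f, ?_⟩
  rw [transpose_submatrix, transpose_one, ← submatrix_mul _ _ _ _ _ Function.bijective_id,
    Matrix.one_mul, submatrix_one _ f.injective]

theorem chainProd_mul_mul {κ : Type*} [Fintype κ] [DecidableEq κ] (d : ℕ → ℕ)
    (L : ∀ ℓ, Matrix (Fin (d ℓ)) κ ℝ) (D : Matrix κ κ ℝ) (R : ∀ ℓ, Matrix κ (Fin (d ℓ)) ℝ)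
    (n : ℕ) (hRL : ∀ ℓ, 1 ≤ ℓ → ℓ ≤ n → R ℓ * L ℓ = 1) :
    chainProd d (fun ℓ => L (ℓ + 1) * D * R ℓ) (n + 1) = L (n + 1) * D ^ (n + 1) * R 0 := by
  induction n with
  | zero => simp [chainProd]
  | succ n ih =>
    rw [chainProd, ih fun ℓ h1 h2 => hRL ℓ h1 (by omega)]
    calc L (n + 1 + 1) * D * R (n + 1) * (L (n + 1) * D ^ (n + 1) * R 0)
        = L (n + 1 + 1) * D * (R (n + 1) * L (n + 1)) * D ^ (n + 1) * R 0 := by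
          simp only [Matrix.mul_assoc]
      _ = _ := by
          rw [hRL (n + 1) (by omega) le_rfl, Matrix.mul_one, Matrix.mul_assoc _ D, ← pow_succ']

theorem exists_chainProd_eq_mul_pow_mul {κ : Type*} [Fintype κ] [DecidableEq κ] (H : ℕ)
    (d : ℕ → ℕ) (hκ : ∀ ℓ, 1 ≤ ℓ → ℓ ≤ H → Fintype.card κ ≤ d ℓ)
    {U : Matrix (Fin (d (H + 1))) κ ℝ} (hU : Uᵀ * U = 1) (D : Matrix κ κ ℝ)
    {Q : Matrix κ (Fin (d 0)) ℝ} (hQ : Q * Qᵀ = 1) :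
    ∃ W : ∀ ℓ, Matrix (Fin (d (ℓ + 1))) (Fin (d ℓ)) ℝ,
      chainProd d W (H + 1) = U * D ^ (H + 1) * Q ∧ ∀ ℓ ≤ H, frobSq (W ℓ) = (Dᵀ * D).trace := by
  have hE : ∀ ℓ, ∃ E : Matrix (Fin (d ℓ)) κ ℝ, 1 ≤ ℓ → ℓ ≤ H → Eᵀ * E = 1 := by
    intro ℓ
    by_cases hℓ : 1 ≤ ℓ ∧ ℓ ≤ H
    · obtain ⟨E, hE⟩ := exists_transpose_mul_self_eq_one (m := Fin (d ℓ)) (κ := κ)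
        (by rw [Fintype.card_fin]; exact hκ ℓ hℓ.1 hℓ.2)
      exact ⟨E, fun _ _ => hE⟩
    · exact ⟨0, fun h1 h2 => absurd ⟨h1, h2⟩ hℓ⟩
  choose E hE using hE
  set L : ∀ ℓ, Matrix (Fin (d ℓ)) κ ℝ := Function.update E (H + 1) U
  set R : ∀ ℓ, Matrix κ (Fin (d ℓ)) ℝ := Function.update (fun ℓ => (E ℓ)ᵀ) 0 Q
  have hLtop : L (H + 1) = U := Function.update_self ..
  have hLE : ∀ ℓ ≠ H + 1, L ℓ = E ℓ := fun ℓ h => Function.update_of_ne h ..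
  have hR0 : R 0 = Q := Function.update_self ..
  have hRE : ∀ ℓ ≠ 0, R ℓ = (E ℓ)ᵀ := fun ℓ h => Function.update_of_ne h ..
  refine ⟨fun ℓ => L (ℓ + 1) * D * R ℓ, ?_, fun ℓ hℓ => ?_⟩
  · rw [chainProd_mul_mul d L D R H fun ℓ h1 h2 => ?_, hLtop, hR0]
    rw [hLE ℓ (by omega), hRE ℓ (by omega)]
    exact hE ℓ h1 h2
  · have hL : (L (ℓ + 1))ᵀ * L (ℓ + 1) = 1 := by
      rcases hℓ.eq_or_lt with rfl | hℓ
      · rwa [hLtop]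
      · rw [hLE _ (by omega)]; exact hE _ (by omega) hℓ
    have hR : R ℓ * (R ℓ)ᵀ = 1 := by
      rcases Nat.eq_zero_or_pos ℓ with rfl | hℓ0
      · rwa [hR0]
      · rw [hRE _ (by omega), transpose_transpose]; exact hE _ hℓ0 hℓ
    exact frobSq_mul_mul_of_orthonormal hL D hR

theorem exists_balanced_factorization (H : ℕ) (d : ℕ → ℕ)
    (C : Matrix (Fin (d (H + 1))) (Fin (d 0)) ℝ) (hd : ∀ ℓ, 1 ≤ ℓ → ℓ ≤ H → C.rank ≤ d ℓ) :
    ∃ W : ∀ ℓ, Matrix (Fin (d (ℓ + 1))) (Fin (d ℓ)) ℝ, chainProd d W (H + 1) = C ∧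
      ∀ ℓ ≤ H, frobSq (W ℓ) = gramEigenRpowSum C (1 / ((H : ℝ) + 1)) := by
  obtain ⟨U, Q, hU, hQ, hC⟩ := C.exists_compact_svd
  set ev := C.isHermitian_transpose_mul_self.eigenvalues
  set q : ℝ := 1 / ((H : ℝ) + 1)
  -- each factor carries the `(H + 1)`-th root `s a` of the singular value `√(ev a)`
  set s : C.gramEigenSupport → ℝ := fun a => √(ev a) ^ q
  have hsH : ∀ a, s a ^ (H + 1) = √(ev a) := fun a => by
    rw [show s a = √(ev a) ^ ((H + 1 : ℕ) : ℝ)⁻¹ by simp only [s, q]; push_cast; ring_nf,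
      Real.rpow_inv_natCast_pow (Real.sqrt_nonneg _) H.succ_ne_zero]
  obtain ⟨W, hWC, hW⟩ := exists_chainProd_eq_mul_pow_mul H d
    (fun ℓ h1 h2 => (card_eigenvalues_ne_zero_eq_rank C).trans_le (hd ℓ h1 h2)) hU
    (diagonal s) hQ
  refine ⟨W, ?_, fun ℓ hℓ => ?_⟩
  · rw [hWC, diagonal_pow]
    exact (congrArg (U * diagonal · * Q) (funext hsH)).trans hC.symm
  · rw [hW ℓ hℓ, diagonal_transpose, diagonal_mul_diagonal, trace_diagonal,
      gramEigenRpowSum_eq_sum_gramEigenSupport C (by positivity)]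
    refine Finset.sum_congr rfl fun a _ => ?_
    rw [← Real.mul_rpow (Real.sqrt_nonneg _) (Real.sqrt_nonneg _),
      Real.mul_self_sqrt ((posSemidef_transpose_mul_self C).eigenvalues_nonneg a)]

/-- Among all factorizations `C = W_{H+1} ⋯ W₁` through dimensions `d ℓ ≥ min (d 0) (d (H+1))`,
the minimal total energy `Σ ‖W_ℓ‖_F²` equals `(H+1)·Σ_i σ_i(C)^{2/(H+1)}`, where the sum over
the singular values of `C` is expressed via the eigenvalues of `Cᵀ C`. -/
theorem min_energy_factorization (H : ℕ) (d : ℕ → ℕ)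
    (hd : ∀ ℓ ≤ H + 1, min (d 0) (d (H + 1)) ≤ d ℓ)
    (C : Matrix (Fin (d (H + 1))) (Fin (d 0)) ℝ) :
    IsLeast {E : ℝ | ∃ W : ∀ ℓ, Matrix (Fin (d (ℓ + 1))) (Fin (d ℓ)) ℝ,
        chainProd d W (H + 1) = C ∧ E = ∑ ℓ ∈ Finset.range (H + 1), frobSq (W ℓ)}
      ((H + 1 : ℝ) *
        ∑ i, ((Matrix.isHermitian_transpose_mul_self C).eigenvalues i) ^
          ((1 : ℝ) / (H + 1))) := by
  constructor
  · have hrank : ∀ ℓ, 1 ≤ ℓ → ℓ ≤ H → C.rank ≤ d ℓ := fun ℓ _ hℓ =>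
      (le_min C.rank_le_width C.rank_le_height).trans (hd ℓ (by omega))
    obtain ⟨W, hWC, hW⟩ := exists_balanced_factorization H d C hrank
    refine ⟨W, hWC, ?_⟩
    rw [Finset.sum_congr rfl fun ℓ hℓ => hW ℓ (Nat.lt_succ_iff.mp (Finset.mem_range.mp hℓ)),
      Finset.sum_const, Finset.card_range, nsmul_eq_mul]
    push_cast
    rfl
  · rintro E ⟨W, rfl, rfl⟩
    exact add_one_mul_gramEigenRpowSum_chainProd_le d W H
end

section
/- Consider the gradient flow dW_ℓ/dt = −∂L/∂W_ℓ for the loss L(W₁,...,W_{H+1}) = (1/m)‖W_{H+1}⋯W₁ B − Y‖_F² with fixed matrices B, Y. Then for every 1 ≤ ℓ ≤ H and all t ≥ 0, d/dt (W_ℓ W_ℓᵀ) = d/dt (W_{ℓ+1}ᵀ W_{ℓ+1}). Consequently, if the initialization is balanced (W_ℓ(0) W_ℓ(0)ᵀ = W_{ℓ+1}(0)ᵀ W_{ℓ+1}(0) for all ℓ), then W(t) is balanced for all t ≥ 0. -/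
open Matrix

/-- Segment product `seg d W a k = W (a+k-1) * ⋯ * W a`. -/
def seg (d : ℕ → ℕ) (W : ∀ ℓ, Matrix (Fin (d (ℓ + 1))) (Fin (d ℓ)) ℝ) (a : ℕ) :
    (k : ℕ) → Matrix (Fin (d (a + k))) (Fin (d a)) ℝ
  | 0 => (1 : Matrix (Fin (d a)) (Fin (d a)) ℝ)
  | k + 1 => W (a + k) * seg d W a k

/-! The gradient factors through the layers: writing `G_ℓ = (m / 2) • ∂L/∂W_ℓ`, one has
`G_ℓ W_ℓᵀ = W_{ℓ+1}ᵀ G_{ℓ+1}`, both sides being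
`(W_{H+1}⋯W_{ℓ+2})ᵀ (W_{H+1}⋯W₁ B − Y) Bᵀ (W_ℓ⋯W₁)ᵀ`. Along the flow,
`d/dt (W_ℓ W_ℓᵀ) = -(2/m) (G_ℓ W_ℓᵀ + (G_ℓ W_ℓᵀ)ᵀ)` and
`d/dt (W_{ℓ+1}ᵀ W_{ℓ+1}) = -(2/m) (W_{ℓ+1}ᵀ G_{ℓ+1} + (W_{ℓ+1}ᵀ G_{ℓ+1})ᵀ)`, so the two derivatives
agree and the difference of the two Gram matrices is constant in time. -/

section MatrixDerivative

variable {𝕜 : Type*} [NontriviallyNormedField 𝕜] {l n p : Type*} {t : 𝕜}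

theorem hasDerivAt_matrix_mul_apply [Fintype n] {𝔸 : Type*} [NormedRing 𝔸] [NormedAlgebra 𝕜 𝔸]
    {A : 𝕜 → Matrix l n 𝔸} {C : 𝕜 → Matrix n p 𝔸} {A' : Matrix l n 𝔸} {C' : Matrix n p 𝔸}
    (hA : ∀ i k, HasDerivAt (fun s => A s i k) (A' i k) t)
    (hC : ∀ k j, HasDerivAt (fun s => C s k j) (C' k j) t) (i : l) (j : p) :
    HasDerivAt (fun s => (A s * C s) i j) ((A' * C t + A t * C') i j) t := by
  simp only [mul_apply, Matrix.add_apply, ← Finset.sum_add_distrib]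
  exact HasDerivAt.fun_sum fun k _ => (hA i k).fun_mul (hC k j)

variable {W : 𝕜 → Matrix l n 𝕜} {W' : Matrix l n 𝕜}

theorem hasDerivAt_mul_transpose_self_apply [Fintype n]
    (hW : ∀ i k, HasDerivAt (fun s => W s i k) (W' i k) t) (i j : l) :
    HasDerivAt (fun s => (W s * (W s)ᵀ) i j) ((W' * (W t)ᵀ + (W' * (W t)ᵀ)ᵀ) i j) t := by
  rw [transpose_mul, transpose_transpose]
  exact hasDerivAt_matrix_mul_apply hW (fun k j => hW j k) i j

theorem hasDerivAt_transpose_mul_self_apply [Fintype l]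
    (hW : ∀ i k, HasDerivAt (fun s => W s i k) (W' i k) t) (i j : n) :
    HasDerivAt (fun s => ((W s)ᵀ * W s) i j) (((W t)ᵀ * W' + ((W t)ᵀ * W')ᵀ) i j) t := by
  rw [transpose_mul, transpose_transpose, add_comm]
  exact hasDerivAt_matrix_mul_apply (fun i k => hW k i) hW i j

theorem exists_hasDerivAt_gram_of_mul_transpose_eq [Fintype n] [Fintype p]
    {W₁ : 𝕜 → Matrix l n 𝕜} {W₂ : 𝕜 → Matrix p l 𝕜} {W₁' : Matrix l n 𝕜} {W₂' : Matrix p l 𝕜}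
    (hW₁ : ∀ i k, HasDerivAt (fun s => W₁ s i k) (W₁' i k) t)
    (hW₂ : ∀ i k, HasDerivAt (fun s => W₂ s i k) (W₂' i k) t)
    (h : W₁' * (W₁ t)ᵀ = (W₂ t)ᵀ * W₂') (i j : l) :
    ∃ D, HasDerivAt (fun s => (W₁ s * (W₁ s)ᵀ) i j) D t ∧
      HasDerivAt (fun s => ((W₂ s)ᵀ * W₂ s) i j) D t :=
  ⟨_, hasDerivAt_mul_transpose_self_apply hW₁ i j,
    h ▸ hasDerivAt_transpose_mul_self_apply hW₂ i j⟩

end MatrixDerivative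

theorem eq_of_forall_hasDerivAt_eq {E : Type*} [NormedAddCommGroup E] [NormedSpace ℝ E]
    {f g : ℝ → E} (h : ∀ s, ∃ D, HasDerivAt f D s ∧ HasDerivAt g D s) {a : ℝ} (ha : f a = g a)
    (t : ℝ) : f t = g t := by
  choose D hf hg using h
  refine congrFun (eq_of_fderiv_eq (𝕜 := ℝ) (fun s => (hf s).differentiableAt)
    (fun s => (hg s).differentiableAt) (fun s => ?_) a ha) t
  rw [(hf s).hasFDerivAt.fderiv, (hg s).hasFDerivAt.fderiv]

section Chain

variable {d : ℕ → ℕ} (V : ∀ ℓ, Matrix (Fin (d (ℓ + 1))) (Fin (d ℓ)) ℝ)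

theorem family_eq_submatrix_cast {p q : ℕ} (h : p = q) :
    V p = (V q).submatrix (Fin.cast (by rw [h])) (Fin.cast (by rw [h])) := by
  subst h; rfl

theorem seg_succ_submatrix (a k : ℕ) :
    (seg d V a (k + 1)).submatrix (Fin.cast (congrArg d (Nat.succ_add a k))) id =
      seg d V (a + 1) k * V a := by
  induction k with
  | zero => simp [seg]
  | succ k ih =>
    change (V (a + (k + 1)) * seg d V a (k + 1)).submatrix _ id =
      V (a + 1 + k) * seg d V (a + 1) k * V a
    rw [Matrix.mul_assoc, ← ih, family_eq_submatrix_cast V (Nat.succ_add a k)]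
    exact (submatrix_mul_equiv _ _ _ (finCongr (congrArg d (Nat.succ_add a k))) _).symm

theorem transpose_seg_succ_mul_submatrix {X : Type*} {N : ℕ} (E : Matrix (Fin (d N)) X ℝ)
    (a k : ℕ) (h₁ : a + (k + 1) = N) (h₂ : a + 1 + k = N) :
    (seg d V a (k + 1))ᵀ * E.submatrix (Fin.cast (congrArg d h₁)) id =
      (V a)ᵀ * ((seg d V (a + 1) k)ᵀ * E.submatrix (Fin.cast (congrArg d h₂)) id) := by
  have hE : E.submatrix (Fin.cast (congrArg d h₂)) id =
      (E.submatrix (Fin.cast (congrArg d h₁)) id).submatrix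
        (Fin.cast (congrArg d (Nat.succ_add a k))) id := rfl
  rw [← Matrix.mul_assoc, ← transpose_mul, ← seg_succ_submatrix, transpose_submatrix, hE]
  exact (submatrix_mul_equiv _ _ id (finCongr (congrArg d (Nat.succ_add a k))) id).symm

end Chain

section Gradient

variable (H nbar : ℕ) (d : ℕ → ℕ) (B : Matrix (Fin (d 0)) (Fin nbar) ℝ)
  (Y : Matrix (Fin (d (H + 1))) (Fin nbar) ℝ) (V : ∀ ℓ, Matrix (Fin (d (ℓ + 1))) (Fin (d ℓ)) ℝ)

/-- `(m / 2) • ∂L/∂W_a`, with the number `b = H - a` of layers above `a` as an index of its own,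
so that `a + 1 + b = H + 1` is a hypothesis rather than a truncated subtraction. -/
def lossGrad (a b : ℕ) (h : a + 1 + b = H + 1) : Matrix (Fin (d (a + 1))) (Fin (d a)) ℝ :=
  (seg d V (a + 1) b)ᵀ * (chainProd d V (H + 1) * B - Y).submatrix (Fin.cast (congrArg d h)) id *
    Bᵀ * (chainProd d V a)ᵀ

theorem lossGrad_mul_transpose (ℓ b : ℕ) (h₁ : ℓ + 1 + (b + 1) = H + 1)
    (h₂ : ℓ + 1 + 1 + b = H + 1) :
    lossGrad H nbar d B Y V ℓ (b + 1) h₁ * (V ℓ)ᵀ =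
      (V (ℓ + 1))ᵀ * lossGrad H nbar d B Y V (ℓ + 1) b h₂ := by
  have hprod : (chainProd d V ℓ)ᵀ * (V ℓ)ᵀ = (chainProd d V (ℓ + 1))ᵀ :=
    (transpose_mul _ _).symm
  simp only [lossGrad, Matrix.mul_assoc, hprod]
  rw [← Matrix.mul_assoc (seg d V (ℓ + 1) (b + 1))ᵀ,
    transpose_seg_succ_mul_submatrix V _ (ℓ + 1) b h₁ h₂]
  simp only [Matrix.mul_assoc]

end Gradient

/-- Balancedness is preserved by the gradient flow of the factored least-squares loss
`L(W) = (1/m) ‖W_{H+1} ⋯ W₁ B − Y‖_F²`. -/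
theorem gradient_flow_preserves_balancedness
    (H nbar : ℕ) (d : ℕ → ℕ) (m : ℝ)
    (B : Matrix (Fin (d 0)) (Fin nbar) ℝ)
    (Y : Matrix (Fin (d (H + 1))) (Fin nbar) ℝ)
    (W : ℝ → ∀ ℓ, Matrix (Fin (d (ℓ + 1))) (Fin (d ℓ)) ℝ)
    -- `W` solves the gradient flow `dW_ℓ/dt = −∂L/∂W_ℓ`, where
    -- `∂L/∂W_ℓ = (2/m) (W_{H+1}⋯W_{ℓ+1})ᵀ (W_{H+1}⋯W₁ B − Y) Bᵀ (W_{ℓ−1}⋯W₁)ᵀ` :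
    (hflow : ∀ a b : ℕ, ∀ hab : a + b = H,
      ∀ (i : Fin (d (a + 1))) (j : Fin (d a)) (t : ℝ),
        HasDerivAt (fun s => W s a i j)
          (-((2 / m) *
            (((seg d (W t) (a + 1) b)ᵀ *
                (chainProd d (W t) (H + 1) * B - Y).submatrix
                  (Fin.cast (congrArg d (show (a + 1) + b = H + 1 by omega))) id *
                Bᵀ * (chainProd d (W t) a)ᵀ) i j))) t) :
    (∀ ℓ < H, ∀ (t : ℝ) (i j : Fin (d (ℓ + 1))),
        deriv (fun s => (W s ℓ * (W s ℓ)ᵀ) i j) t =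
          deriv (fun s => ((W s (ℓ + 1))ᵀ * W s (ℓ + 1)) i j) t) ∧
      ((∀ ℓ < H, W 0 ℓ * (W 0 ℓ)ᵀ = (W 0 (ℓ + 1))ᵀ * W 0 (ℓ + 1)) →
        ∀ t : ℝ, 0 ≤ t →
          ∀ ℓ < H, W t ℓ * (W t ℓ)ᵀ = (W t (ℓ + 1))ᵀ * W t (ℓ + 1)) := by
  have hgram : ∀ ℓ < H, ∀ (t : ℝ) (i j : Fin (d (ℓ + 1))), ∃ D,
      HasDerivAt (fun s => (W s ℓ * (W s ℓ)ᵀ) i j) D t ∧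
        HasDerivAt (fun s => ((W s (ℓ + 1))ᵀ * W s (ℓ + 1)) i j) D t := by
    intro ℓ hℓ t i j
    obtain ⟨b, rfl⟩ : ∃ b, H = ℓ + 1 + b := ⟨H - (ℓ + 1), by omega⟩
    have h₁ : ℓ + 1 + (b + 1) = ℓ + 1 + b + 1 := by omega
    have h₂ : ℓ + 1 + 1 + b = ℓ + 1 + b + 1 := by omega
    refine exists_hasDerivAt_gram_of_mul_transpose_eq
      (W₁' := -((2 / m) • lossGrad _ nbar d B Y (W t) ℓ (b + 1) h₁))
      (W₂' := -((2 / m) • lossGrad _ nbar d B Y (W t) (ℓ + 1) b h₂))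
      (hflow ℓ (b + 1) (by omega) · · t) (hflow (ℓ + 1) b rfl · · t) ?_ i j
    rw [Matrix.neg_mul, Matrix.mul_neg, Matrix.smul_mul, Matrix.mul_smul, lossGrad_mul_transpose]
  refine ⟨fun ℓ hℓ t i j => ?_, fun hbal t _ ℓ hℓ => ?_⟩
  · obtain ⟨D, h₁, h₂⟩ := hgram ℓ hℓ t i j
    rw [h₁.deriv, h₂.deriv]
  · ext i j
    exact eq_of_forall_hasDerivAt_eq (hgram ℓ hℓ · i j) (congrFun₂ (hbal ℓ hℓ) i j) t
end

section
/- Let F: R^p → [0,∞) be a nonnegative C² function, x₀ ∈ R^p, and r > 0 such that 4F(x₀) < r²·α, where α = inf{ |∇F(x)|²/F(x) : x ∈ B(x₀,r), F(x) ≠ 0 }. Then the gradient flow φ'(t) = −∇F(φ(t)) with φ(0) = x₀ has a unique solution defined for all t ≥ 0, φ(t) stays in the closed ball B(x₀,r), φ(t) converges as t → ∞ to a point x̃ ∈ B(x₀,r) with F(x̃) = 0, and moreover ‖φ(t) − x̃‖₂ ≤ r·e^{−αt/2} and F(φ(t)) ≤ e^{−αt} F(x₀) for all t ≥ 0. -/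
/-!
Along a gradient flow `φ' = -∇F(φ)` one has `(F ∘ φ)' = -‖∇F(φ)‖²`. As long as `φ` stays in the
ball, where `α F ≤ ‖∇F‖²`, this gives `F(φ t) ≤ e^{-αt} F(x₀)` and, since
`‖φ'‖ = ‖∇F(φ)‖ ≤ -(2/√α) (√(F ∘ φ))'`, the length estimate
`‖φ t - φ s‖ ≤ (2/√α) (√F(φ s) - √F(φ t))`. So `‖φ t - x₀‖ + (2/√α) √F(φ t)` never exceeds its
initial value `ρ = (2/√α) √F(x₀)`, and `ρ < r` is exactly `4 F(x₀) < r² α`; a continuity argument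
then keeps `φ` inside the ball for all times. The solution itself is obtained by cutting the
gradient field off outside the ball, which makes it globally Lipschitz and bounded. Finally the
length estimate makes `φ` Cauchy at infinity, with tail `ρ e^{-αt/2}`.
-/

open Metric Filter Set Real Topology
open scoped NNReal

lemma le_sq_div_add_of_mul_le_sq {α g ε G : ℝ} (hα : 0 < α) (hg : 0 ≤ g) (hε : 0 < ε)
    (hG : 0 ≤ G) (h : α * g ≤ G ^ 2) :
    G ≤ G ^ 2 / (√α * √(g + ε)) + √α * √ε := by
  have hu : 0 < √(g + ε) := sqrt_pos.2 (by linarith)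
  have hsqrt_le : √α * √g ≤ G := by
    rw [← sqrt_mul hα.le, ← sqrt_sq hG]
    exact sqrt_le_sqrt h
  have hu_le : √(g + ε) ≤ √g + √ε := by
    rw [sqrt_le_left (by positivity)]
    nlinarith [sq_sqrt hg, sq_sqrt hε.le, sqrt_nonneg g, sqrt_nonneg ε]
  rw [← sub_le_iff_le_add, le_div_iff₀ (by positivity)]
  rcases le_total G (√α * √(g + ε)) with hlt | hge
  · nlinarith [sqrt_nonneg α, sqrt_nonneg ε, mul_le_mul_of_nonneg_left hu_le (sqrt_nonneg α)]
  · nlinarith [mul_le_mul_of_nonneg_left hge hG,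
      mul_nonneg (mul_nonneg (sqrt_nonneg α) (sqrt_nonneg ε)) (mul_nonneg (sqrt_nonneg α) hu.le)]

lemma two_div_sqrt_mul_sqrt_lt {a α r : ℝ} (ha : 0 ≤ a) (hα : 0 < α) (hr : 0 < r)
    (h : 4 * a < r ^ 2 * α) : 2 / √α * √a < r := by
  rw [div_mul_eq_mul_div, div_lt_iff₀ (sqrt_pos.2 hα)]
  refine (pow_lt_pow_iff_left₀ (by positivity) (by positivity) two_ne_zero).1 ?_
  rw [mul_pow, mul_pow, sq_sqrt ha, sq_sqrt hα.le]
  linarith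

section ODE

variable {E : Type*} [NormedAddCommGroup E] [NormedSpace ℝ E]

theorem exists_hasDerivAt_of_lipschitzWith [CompleteSpace E] {v : E → E} {K : ℝ≥0} {C : ℝ}
    (hv : LipschitzWith K v) (hC : ∀ x, ‖v x‖ ≤ C) (x₀ : E) :
    ∃ γ : ℝ → E, γ 0 = x₀ ∧ ∀ t, HasDerivAt γ (v (γ t)) t := by
  have hC0 : 0 ≤ C := (norm_nonneg _).trans (hC x₀)
  have hlocal (n : ℕ) : ∃ γ : ℝ → E, γ 0 = x₀ ∧ ∀ t ∈ Ioo (-(n + 1 : ℝ)) (n + 1),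
      HasDerivAt γ (v (γ t)) t := by
    have hPicard : IsPicardLindelof (fun _ => v) (tmin := -(n + 1 : ℝ)) (tmax := n + 1)
        ⟨0, by constructor <;> linarith [n.cast_nonneg (α := ℝ)]⟩ x₀
        ⟨C * (n + 1), by positivity⟩ 0 ⟨C, hC0⟩ K :=
      .of_time_independent (fun x _ => hC x) hv.lipschitzOnWith (by simp; exact le_rfl)
    obtain ⟨γ, hγ0, hγ⟩ := hPicard.exists_eq_forall_mem_Icc_hasDerivWithinAt₀
    exact ⟨γ, hγ0, fun t ht => (hγ t (Ioo_subset_Icc_self ht)).hasDerivAt (Icc_mem_nhds ht.1 ht.2)⟩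
  choose γ hγ0 hγ using hlocal
  have hagree (m n : ℕ) {t : ℝ} (hm : |t| < m + 1) (hn : |t| < n + 1) : γ m t = γ n t := by
    set k := min m n
    have hkm : (k : ℝ) ≤ m := by exact_mod_cast min_le_left m n
    have hkn : (k : ℝ) ≤ n := by exact_mod_cast min_le_right m n
    have hsub : Ioo (-(k + 1 : ℝ)) (k + 1) ⊆ Ioo (-(m + 1 : ℝ)) (m + 1) ∩
        Ioo (-(n + 1 : ℝ)) (n + 1) := fun s hs => by
      constructor <;> constructor <;> linarith [hs.1, hs.2]
    refine ODE_solution_unique_of_mem_Ioo (v := fun _ => v) (s := fun _ => univ)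
      (fun _ _ => hv.lipschitzOnWith) (t₀ := 0) ⟨neg_lt_zero.2 (by positivity), by positivity⟩
      (fun s hs => ⟨hγ m s (hsub hs).1, trivial⟩) (fun s hs => ⟨hγ n s (hsub hs).2, trivial⟩)
      ((hγ0 m).trans (hγ0 n).symm) ?_
    rcases min_choice m n with h | h <;> simp only [k, h] <;> exact abs_lt.1 ‹_›
  refine ⟨fun t => γ ⌈|t|⌉₊ t, hγ0 _, fun t => ?_⟩
  have hN : |t| < ⌈|t|⌉₊ + 1 := (Nat.le_ceil _).trans_lt (lt_add_one _)
  refine (hγ ⌈|t|⌉₊ t (abs_lt.1 hN)).congr_of_eventuallyEq ?_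
  filter_upwards [(continuous_abs.isOpen_preimage _ isOpen_Iio).mem_nhds hN] with s hs
  exact hagree _ _ ((Nat.le_ceil _).trans_lt (lt_add_one _)) hs

theorem exists_lipschitzWith_eqOn_closedBall [FiniteDimensional ℝ E] [HasContDiffBump E]
    {v : E → E} (hv : ContDiff ℝ 1 v) (x₀ : E) (r : ℝ) :
    ∃ (w : E → E) (K : ℝ≥0) (C : ℝ),
      LipschitzWith K w ∧ (∀ x, ‖w x‖ ≤ C) ∧ EqOn w v (closedBall x₀ r) := by
  let χ : ContDiffBump x₀ := ⟨|r| + 1, |r| + 2, by positivity, by linarith⟩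
  have hw : ContDiff ℝ 1 fun x => χ x • v x := χ.contDiff.smul hv
  have hsupp : HasCompactSupport fun x => χ x • v x := χ.hasCompactSupport.smul_right
  obtain ⟨K, hK⟩ := hw.lipschitzWith_of_hasCompactSupport hsupp one_ne_zero
  obtain ⟨C, hC⟩ := hsupp.exists_bound_of_continuous hw.continuous
  refine ⟨_, K, C, hK, hC, fun x hx => ?_⟩
  have hx' : x ∈ closedBall x₀ χ.rIn :=
    closedBall_subset_closedBall ((le_abs_self r).trans (le_add_of_nonneg_right zero_le_one)) hx
  simp [χ.one_of_mem_closedBall hx']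

theorem eqOn_Ici_of_hasDerivAt_of_locallyLipschitz {v : E → E} (hv : LocallyLipschitz v)
    {f g : ℝ → E} (hf : ∀ t, 0 ≤ t → HasDerivAt f (v (f t)) t)
    (hg : ∀ t, 0 ≤ t → HasDerivAt g (v (g t)) t) (h0 : f 0 = g 0) : EqOn f g (Ici 0) := by
  intro t ht
  have hfc : ContinuousOn f (Icc 0 t) := HasDerivAt.continuousOn fun s hs => hf s hs.1
  have hgc : ContinuousOn g (Icc 0 t) := HasDerivAt.continuousOn fun s hs => hg s hs.1
  obtain ⟨K, hK⟩ := hv.locallyLipschitzOn.exists_lipschitzOnWith_of_compact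
    ((isCompact_Icc.image_of_continuousOn hfc).union (isCompact_Icc.image_of_continuousOn hgc))
  exact ODE_solution_unique_of_mem_Icc_right (v := fun _ => v) (fun _ _ => hK) hfc
    (fun s hs => (hf s hs.1).hasDerivWithinAt) (fun s hs => .inl ⟨s, Ico_subset_Icc_self hs, rfl⟩)
    hgc (fun s hs => (hg s hs.1).hasDerivWithinAt)
    (fun s hs => .inr ⟨s, Ico_subset_Icc_self hs, rfl⟩) h0 ⟨ht, le_rfl⟩

end ODE

theorem exists_tendsto_of_norm_sub_le {E : Type*} [NormedAddCommGroup E] [CompleteSpace E]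
    {f : ℝ → E} {b : ℝ → ℝ}
    (hb : Tendsto b atTop (𝓝 0)) (h : ∀ s t, 0 ≤ s → s ≤ t → ‖f t - f s‖ ≤ b s) :
    ∃ l, Tendsto f atTop (𝓝 l) ∧ ∀ s, 0 ≤ s → ‖f s - l‖ ≤ b s := by
  have hcauchy : CauchySeq f := Metric.cauchySeq_iff'.2 fun ε hε => by
    obtain ⟨N, hN, hN0⟩ := ((hb.eventually (gt_mem_nhds hε)).and (eventually_ge_atTop 0)).exists
    exact ⟨N, fun n hn => by rw [dist_eq_norm]; exact (h N n hN0 hn).trans_lt hN⟩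
  obtain ⟨l, hl⟩ := cauchySeq_tendsto_of_complete hcauchy
  refine ⟨l, hl, fun s hs => ?_⟩
  rw [norm_sub_rev]
  exact le_of_tendsto ((hl.sub_const (f s)).norm)
    ((eventually_ge_atTop s).mono fun t hst => h s t hs hst)

section GradientFlow

variable {E : Type*} [NormedAddCommGroup E] [InnerProductSpace ℝ E] [CompleteSpace E]
  {F : E → ℝ} {f : ℝ → E} {α : ℝ}

lemma contDiff_neg_gradient (hF : ContDiff ℝ 2 F) : ContDiff ℝ 1 fun x => -gradient F x :=
  ((InnerProductSpace.toDual ℝ E).symm.toContinuousLinearEquiv.contDiff.comp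
    (hF.fderiv_right (by norm_num))).neg

lemma hasDerivAt_comp_of_hasDerivAt_neg_gradient {t : ℝ} (hF : DifferentiableAt ℝ F (f t))
    (hf : HasDerivAt f (-gradient F (f t)) t) :
    HasDerivAt (fun s => F (f s)) (-‖gradient F (f t)‖ ^ 2) t := by
  simpa [Function.comp_def, ← inner_gradient_left, real_inner_self_eq_norm_sq] using
    hF.hasFDerivAt.comp_hasDerivAt t hf

lemma le_exp_mul_of_hasDerivAt_neg_gradient (hF : Differentiable ℝ F)
    (hf : ∀ t, 0 ≤ t → HasDerivAt f (-gradient F (f t)) t)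
    (hPL : ∀ t, 0 ≤ t → α * F (f t) ≤ ‖gradient F (f t)‖ ^ 2) {t : ℝ} (ht : 0 ≤ t) :
    F (f t) ≤ exp (-α * t) * F (f 0) := by
  have hderiv : ∀ s, 0 ≤ s → HasDerivAt (fun s => exp (α * s) * F (f s))
      (exp (α * s) * (α * F (f s) - ‖gradient F (f s)‖ ^ 2)) s := fun s hs => by
    refine (((hasDerivAt_id s).const_mul α).exp.mul
      (hasDerivAt_comp_of_hasDerivAt_neg_gradient (hF _) (hf s hs))).congr_deriv ?_
    simp only [id]
    ring
  have hanti : AntitoneOn (fun s => exp (α * s) * F (f s)) (Ici 0) := by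
    refine antitoneOn_of_hasDerivWithinAt_nonpos (convex_Ici 0)
      (f' := fun s => exp (α * s) * (α * F (f s) - ‖gradient F (f s)‖ ^ 2))
      (fun s hs => (hderiv s hs).continuousAt.continuousWithinAt) (fun s hs => ?_) (fun s hs => ?_)
    · rw [interior_Ici] at hs
      exact (hderiv s hs.le).hasDerivWithinAt
    · rw [interior_Ici] at hs
      exact mul_nonpos_of_nonneg_of_nonpos (exp_pos _).le (sub_nonpos.2 (hPL s hs.le))
  calc F (f t) = exp (-α * t) * (exp (α * t) * F (f t)) := by
        rw [← mul_assoc, ← exp_add]; simp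
    _ ≤ exp (-α * t) * F (f 0) := by
        gcongr
        simpa using hanti self_mem_Ici ht ht

-- `√(F ∘ f)` need not be differentiable where `F` vanishes, hence the regularization by `ε`.
lemma norm_sub_le_of_hasDerivAt_neg_gradient_of_pos (hF : Differentiable ℝ F)
    (hF0 : ∀ x, 0 ≤ F x) (hα : 0 < α) {a b ε : ℝ} (hab : a ≤ b) (hε : 0 < ε)
    (hf : ∀ t ∈ Icc a b, HasDerivAt f (-gradient F (f t)) t)
    (hPL : ∀ t ∈ Icc a b, α * F (f t) ≤ ‖gradient F (f t)‖ ^ 2) :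
    ‖f b - f a‖ ≤ 2 / √α * (√(F (f a) + ε) - √(F (f b) + ε)) + √α * √ε * (b - a) := by
  set u : ℝ → ℝ := fun t => √(F (f t) + ε)
  have hu_pos : ∀ t, 0 < u t := fun t => sqrt_pos.2 (by linarith [hF0 (f t)])
  set B : ℝ → ℝ := fun t => 2 / √α * (u a - u t) + √α * √ε * (t - a)
  have hB : ∀ t ∈ Icc a b,
      HasDerivAt B (‖gradient F (f t)‖ ^ 2 / (√α * u t) + √α * √ε) t := fun t ht => by
    have hu : HasDerivAt u (-‖gradient F (f t)‖ ^ 2 / (2 * u t)) t :=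
      ((hasDerivAt_comp_of_hasDerivAt_neg_gradient (hF _) (hf t ht)).add_const ε).sqrt
        (by linarith [hF0 (f t)])
    refine (((hu.const_sub (u a)).const_mul (2 / √α)).add
      (((hasDerivAt_id t).sub_const a).const_mul (√α * √ε))).congr_deriv ?_
    have hut := hu_pos t
    have hsα : 0 < √α := sqrt_pos.2 hα
    field_simp
  have hfence := image_norm_le_of_norm_deriv_right_le_deriv_boundary' (f := fun t => f t - f a)
    ((HasDerivAt.continuousOn hf).sub continuousOn_const)
    (fun t ht => ((hf t (Ico_subset_Icc_self ht)).sub_const (f a)).hasDerivWithinAt)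
    (by simp [B]) (HasDerivAt.continuousOn hB)
    (fun t ht => (hB t (Ico_subset_Icc_self ht)).hasDerivWithinAt)
    (fun t ht => by
      rw [norm_neg]
      exact le_sq_div_add_of_mul_le_sq hα (hF0 _) hε (norm_nonneg _)
        (hPL t (Ico_subset_Icc_self ht)))
    (right_mem_Icc.2 hab)
  simpa [B] using hfence

lemma norm_sub_le_of_hasDerivAt_neg_gradient (hF : Differentiable ℝ F)
    (hF0 : ∀ x, 0 ≤ F x) (hα : 0 < α) {a b : ℝ} (hab : a ≤ b)
    (hf : ∀ t ∈ Icc a b, HasDerivAt f (-gradient F (f t)) t)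
    (hPL : ∀ t ∈ Icc a b, α * F (f t) ≤ ‖gradient F (f t)‖ ^ 2) :
    ‖f b - f a‖ ≤ 2 / √α * (√(F (f a)) - √(F (f b))) := by
  have hcont : Continuous fun ε =>
      2 / √α * (√(F (f a) + ε) - √(F (f b) + ε)) + √α * √ε * (b - a) := by
    fun_prop
  have hlim := (hcont.tendsto 0).mono_left (nhdsWithin_le_nhds (s := Ioi 0))
  simp only [add_zero, sqrt_zero, mul_zero, zero_mul] at hlim
  exact ge_of_tendsto hlim (eventually_mem_nhdsWithin.mono fun ε hε =>
    norm_sub_le_of_hasDerivAt_neg_gradient_of_pos hF hF0 hα hab hε hf hPL)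

lemma norm_sub_le_exp_of_hasDerivAt_neg_gradient (hF : Differentiable ℝ F)
    (hF0 : ∀ x, 0 ≤ F x) (hα : 0 < α) (hf : ∀ t, 0 ≤ t → HasDerivAt f (-gradient F (f t)) t)
    (hPL : ∀ t, 0 ≤ t → α * F (f t) ≤ ‖gradient F (f t)‖ ^ 2) {s t : ℝ} (hs : 0 ≤ s)
    (hst : s ≤ t) : ‖f t - f s‖ ≤ 2 / √α * √(F (f 0)) * exp (-α * s / 2) :=
  calc ‖f t - f s‖ ≤ 2 / √α * (√(F (f s)) - √(F (f t))) :=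
        norm_sub_le_of_hasDerivAt_neg_gradient hF hF0 hα hst (fun τ hτ => hf τ (hs.trans hτ.1))
          (fun τ hτ => hPL τ (hs.trans hτ.1))
    _ ≤ 2 / √α * √(exp (-α * s) * F (f 0)) := by
        gcongr
        exact (sub_le_self _ (sqrt_nonneg _)).trans
          (sqrt_le_sqrt (le_exp_mul_of_hasDerivAt_neg_gradient hF hf hPL hs))
    _ = 2 / √α * √(F (f 0)) * exp (-α * s / 2) := by
        rw [sqrt_mul (exp_pos _).le, ← exp_half]
        ring

theorem exists_tendsto_of_hasDerivAt_neg_gradient (hF : Differentiable ℝ F)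
    (hF0 : ∀ x, 0 ≤ F x) (hα : 0 < α) (hf : ∀ t, 0 ≤ t → HasDerivAt f (-gradient F (f t)) t)
    (hPL : ∀ t, 0 ≤ t → α * F (f t) ≤ ‖gradient F (f t)‖ ^ 2) :
    ∃ l, Tendsto f atTop (𝓝 l) ∧ F l = 0 ∧
      ∀ t, 0 ≤ t → ‖f t - l‖ ≤ 2 / √α * √(F (f 0)) * exp (-α * t / 2) := by
  have hneg : Tendsto (fun t : ℝ => -α * t) atTop atBot :=
    tendsto_id.const_mul_atTop_of_neg (neg_neg_of_pos hα)
  have hbound := (tendsto_exp_comp_nhds_zero.2 (hneg.atBot_div_const two_pos)).const_mul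
    (2 / √α * √(F (f 0)))
  obtain ⟨l, hlim, hdist⟩ := exists_tendsto_of_norm_sub_le (by simpa using hbound)
    fun s t hs hst => norm_sub_le_exp_of_hasDerivAt_neg_gradient hF hF0 hα hf hPL hs hst
  refine ⟨l, hlim, le_antisymm ?_ (hF0 l), hdist⟩
  simpa using le_of_tendsto_of_tendsto ((hF.continuous.tendsto l).comp hlim)
    ((tendsto_exp_comp_nhds_zero.2 hneg).mul_const (F (f 0)))
    ((eventually_ge_atTop 0).mono fun t ht => le_exp_mul_of_hasDerivAt_neg_gradient hF hf hPL ht)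

variable {x₀ : E} {r : ℝ}

lemma sInf_mul_le_norm_gradient_sq (hF0 : ∀ x, 0 ≤ F x) {x : E} (hx : x ∈ closedBall x₀ r) :
    sInf {y : ℝ | ∃ x ∈ closedBall x₀ r, F x ≠ 0 ∧ y = ‖gradient F x‖ ^ 2 / F x} * F x ≤
      ‖gradient F x‖ ^ 2 := by
  rcases (hF0 x).eq_or_lt with hFx | hFx
  · simp [← hFx]
  · refine (le_div_iff₀ hFx).1 (csInf_le ⟨0, ?_⟩ ⟨x, hx, hFx.ne', rfl⟩)
    rintro _ ⟨y, -, -, rfl⟩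
    exact div_nonneg (sq_nonneg _) (hF0 y)

lemma norm_sub_add_mul_sqrt_le_of_eqOn_neg_gradient (hF : Differentiable ℝ F)
    (hF0 : ∀ x, 0 ≤ F x) (hα : 0 < α) (hPL : ∀ x ∈ closedBall x₀ r, α * F x ≤ ‖gradient F x‖ ^ 2)
    (hr : 2 / √α * √(F x₀) < r) {w : E → E}
    (hw : EqOn w (fun x => -gradient F x) (closedBall x₀ r))
    {γ : ℝ → E} (hγ0 : γ 0 = x₀) (hγ : ∀ t, HasDerivAt γ (w (γ t)) t) {t : ℝ} (ht : 0 ≤ t) :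
    ‖γ t - x₀‖ + 2 / √α * √(F (γ t)) ≤ 2 / √α * √(F x₀) := by
  set c := 2 / √α
  set V : ℝ → ℝ := fun t => ‖γ t - x₀‖ + c * √(F (γ t))
  have hγc : Continuous γ := continuous_iff_continuousAt.2 fun t => (hγ t).continuousAt
  have hV : Continuous V := by have := hF.continuous; fun_prop
  suffices Icc 0 t ⊆ {s | V s ≤ V 0} by simpa [V, hγ0] using this ⟨ht, le_rfl⟩
  refine IsClosed.Icc_subset_of_forall_mem_nhdsWithin
    ((isClosed_le hV continuous_const).inter isClosed_Icc) (le_refl (V 0)) fun s ⟨hs, _⟩ => ?_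
  have hVs : ‖γ s - x₀‖ ≤ V s := le_add_of_nonneg_right (by positivity)
  have hball : γ s ∈ ball x₀ r := by
    rw [mem_ball_iff_norm]
    simp only [mem_ofPred_eq, V, hγ0, sub_self, norm_zero, zero_add] at hs
    linarith
  obtain ⟨u, hsu, hu⟩ := exists_Ico_subset_of_mem_nhds
    (hγc.continuousAt.preimage_mem_nhds (isOpen_ball.mem_nhds hball)) (exists_gt s)
  filter_upwards [Ioo_mem_nhdsGT hsu] with y hy
  have hmem : ∀ τ ∈ Icc s y, γ τ ∈ closedBall x₀ r := fun τ hτ =>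
    ball_subset_closedBall (hu ⟨hτ.1, hτ.2.trans_lt hy.2⟩)
  have hlen := norm_sub_le_of_hasDerivAt_neg_gradient hF hF0 hα hy.1.le
    (fun τ hτ => (hγ τ).congr_deriv (hw (hmem τ hτ))) (fun τ hτ => hPL _ (hmem τ hτ))
  have htri := norm_sub_le_norm_sub_add_norm_sub (γ y) (γ s) x₀
  simp only [mem_ofPred_eq, V] at hs ⊢
  rw [mul_sub] at hlen
  linarith

theorem exists_hasDerivAt_neg_gradient_mem_closedBall [FiniteDimensional ℝ E]
    (hF : ContDiff ℝ 2 F) (hF0 : ∀ x, 0 ≤ F x) (hα : 0 < α)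
    (hPL : ∀ x ∈ closedBall x₀ r, α * F x ≤ ‖gradient F x‖ ^ 2)
    (hr : 2 / √α * √(F x₀) < r) :
    ∃ φ : ℝ → E, φ 0 = x₀ ∧
      ∀ t, 0 ≤ t → HasDerivAt φ (-gradient F (φ t)) t ∧ φ t ∈ closedBall x₀ r := by
  obtain ⟨w, K, C, hwK, hwC, hw⟩ :=
    exists_lipschitzWith_eqOn_closedBall (contDiff_neg_gradient hF) x₀ r
  obtain ⟨φ, hφ0, hφ⟩ := exists_hasDerivAt_of_lipschitzWith hwK hwC x₀
  refine ⟨φ, hφ0, fun t ht => ?_⟩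
  have hmem : φ t ∈ closedBall x₀ r := by
    have := norm_sub_add_mul_sqrt_le_of_eqOn_neg_gradient (hF.differentiable (by norm_num)) hF0
      hα hPL hr hw hφ0 hφ ht
    rw [mem_closedBall_iff_norm]
    nlinarith [sqrt_nonneg (F (φ t)), div_nonneg zero_le_two (sqrt_nonneg α)]
  exact ⟨(hφ t).congr_deriv (hw hmem), hmem⟩

end GradientFlow

/-- Chatterjee's local convergence theorem for gradient flow. -/
theorem gradient_flow_local_convergence (p : ℕ)
    (F : EuclideanSpace ℝ (Fin p) → ℝ) (hF : ContDiff ℝ 2 F) (hF0 : ∀ x, 0 ≤ F x)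
    (x₀ : EuclideanSpace ℝ (Fin p)) (r : ℝ) (hr : 0 < r)
    (α : ℝ)
    (hα : α = sInf {y : ℝ | ∃ x ∈ closedBall x₀ r, F x ≠ 0 ∧ y = ‖gradient F x‖ ^ 2 / F x})
    (hinit : 4 * F x₀ < r ^ 2 * α) :
    ∃ φ : ℝ → EuclideanSpace ℝ (Fin p),
      φ 0 = x₀ ∧
      (∀ t : ℝ, 0 ≤ t → HasDerivAt φ (-gradient F (φ t)) t) ∧
      (∀ ψ : ℝ → EuclideanSpace ℝ (Fin p),
        ψ 0 = x₀ → (∀ t : ℝ, 0 ≤ t → HasDerivAt ψ (-gradient F (ψ t)) t) →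
          ∀ t : ℝ, 0 ≤ t → ψ t = φ t) ∧
      (∀ t : ℝ, 0 ≤ t → φ t ∈ closedBall x₀ r) ∧
      ∃ xt ∈ closedBall x₀ r, F xt = 0 ∧
        Tendsto φ atTop (nhds xt) ∧
        (∀ t : ℝ, 0 ≤ t → ‖φ t - xt‖ ≤ r * Real.exp (-α * t / 2)) ∧
        (∀ t : ℝ, 0 ≤ t → F (φ t) ≤ Real.exp (-α * t) * F x₀) := by
  have hFd : Differentiable ℝ F := hF.differentiable (by norm_num)
  have hαpos : 0 < α := pos_of_mul_pos_right (by linarith [hF0 x₀]) (sq_nonneg r)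
  have hPL : ∀ x ∈ closedBall x₀ r, α * F x ≤ ‖gradient F x‖ ^ 2 := fun x hx =>
    hα ▸ sInf_mul_le_norm_gradient_sq hF0 hx
  have hρ := two_div_sqrt_mul_sqrt_lt (hF0 x₀) hαpos hr hinit
  obtain ⟨φ, hφ0, hφ⟩ := exists_hasDerivAt_neg_gradient_mem_closedBall hF hF0 hαpos hPL hρ
  have hφPL : ∀ t, 0 ≤ t → α * F (φ t) ≤ ‖gradient F (φ t)‖ ^ 2 := fun t ht =>
    hPL _ (hφ t ht).2
  obtain ⟨xt, hlim, hFxt, hdist⟩ := exists_tendsto_of_hasDerivAt_neg_gradient hFd hF0 hαpos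
    (fun t ht => (hφ t ht).1) hφPL
  refine ⟨φ, hφ0, fun t ht => (hφ t ht).1, fun ψ hψ0 hψ t ht => ?_, fun t ht => (hφ t ht).2, xt,
    isClosed_closedBall.mem_of_tendsto hlim ((eventually_ge_atTop 0).mono fun t ht => (hφ t ht).2),
    hFxt, hlim, fun t ht => (hdist t ht).trans ?_, fun t ht =>
      hφ0 ▸ le_exp_mul_of_hasDerivAt_neg_gradient hFd (fun t ht => (hφ t ht).1) hφPL ht⟩
  · exact eqOn_Ici_of_hasDerivAt_of_locallyLipschitz (contDiff_neg_gradient hF).locallyLipschitz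
      hψ (fun t ht => (hφ t ht).1) (hψ0.trans hφ0.symm) ht
  · rw [hφ0]
    exact mul_le_mul_of_nonneg_right hρ.le (exp_pos _).le
end
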